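/- Let α > 0 be a non-integer and set m = ⌊α⌋. Let (ψ_j)_{j≥1} be the Fourier basis on [0,1]. There exists a constant C > 0 depending only on α such that: for every real sequence (f_i)_{i≥1} with S := ∑_{i=1}^∞ i^α |f_i| < ∞, the series f(x) = ∑_{i=1}^∞ f_i ψ_i(x) defines a function that is m times continuously differentiable on [0,1] (the differentiated series converging uniformly), and its m-th derivative satisfies |f^{(m)}(x) − f^{(m)}(x')| ≤ C · S · |x − x'|^{α−m} for all x, x' ∈ [0,1]. -/

import Mathlib

/-!
Each `ψ_{i+1}` is a single cosine mode `a cos (c x + φ)` with `|a| ≤ √2` and frequency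
`0 ≤ c ≤ 2π(i+1)`. Its `k`-th derivative is again a cosine mode, of amplitude `|a| c^k`, so for
`k ≤ ⌊α⌋` the differentiated series is dominated by the summable weights `(i+1)^α |f_i|` and
may be differentiated termwise. For the Hölder bound, interpolating `|cos u - cos v| ≤ 2` and
`|cos u - cos v| ≤ |u - v|` gives `|cos u - cos v| ≤ 2 |u - v|^s` for `s ∈ [0,1]`, so the
`⌊α⌋`-th derivative of a mode is `(α - ⌊α⌋)`-Hölder with constant `2 |a| c^α`.
-/

open Real

/-- The Fourier basis on `[0,1]`: `ψ₁ = 1`, `ψ_{2i}(x) = √2 cos(2πix)`,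
`ψ_{2i+1}(x) = √2 sin(2πix)` for `i ≥ 1` (viewed as functions on `ℝ`). -/
noncomputable def fourierPsi (j : ℕ) (x : ℝ) : ℝ :=
  if j = 1 then 1
  else if j % 2 = 0 then Real.sqrt 2 * Real.cos (2 * Real.pi * (j / 2 : ℕ) * x)
  else Real.sqrt 2 * Real.sin (2 * Real.pi * (j / 2 : ℕ) * x)

section SmoothSeries

variable {ι 𝕜 F : Type*} [NontriviallyNormedField 𝕜] [IsRCLikeNormedField 𝕜]
  [NormedAddCommGroup F] [CompleteSpace F] [NormedSpace 𝕜 F]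
  {N : ℕ∞} {f : ι → 𝕜 → F} {v : ℕ → ι → ℝ}

theorem iteratedDeriv_tsum_apply (hf : ∀ i, ContDiff 𝕜 N (f i))
    (hv : ∀ k : ℕ, (k : ℕ∞) ≤ N → Summable (v k))
    (h'f : ∀ (k : ℕ) (i : ι) (x : 𝕜), (k : ℕ∞) ≤ N → ‖iteratedFDeriv 𝕜 k (f i) x‖ ≤ v k i)
    {k : ℕ} (hk : (k : ℕ∞) ≤ N) (x : 𝕜) :
    iteratedDeriv k (fun y => ∑' i, f i y) x = ∑' i, iteratedDeriv k (f i) x := by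
  simp only [iteratedDeriv_eq_iteratedFDeriv, iteratedFDeriv_tsum_apply hf hv h'f hk x]
  exact (ContinuousMultilinearMap.apply 𝕜 (fun _ : Fin k => 𝕜) F fun _ => 1).map_tsum
    (.of_norm_bounded (hv k hk) fun i => h'f k i x hk)

end SmoothSeries

theorem abs_tsum_sub_tsum_le {ι : Type*} {u u' w : ι → ℝ} (hu : Summable u)
    (hu' : Summable u') (hw : Summable w) (h : ∀ i, |u i - u' i| ≤ w i) :
    |∑' i, u i - ∑' i, u' i| ≤ ∑' i, w i := by
  rw [← hu.tsum_sub hu']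
  exact tsum_of_norm_bounded (f := fun i => u i - u' i) hw.hasSum h

theorem Real.abs_cos_sub_cos_le_two_mul_rpow (u v : ℝ) {s : ℝ} (hs0 : 0 ≤ s) (hs1 : s ≤ 1) :
    |cos u - cos v| ≤ 2 * |u - v| ^ s := by
  set d := |cos u - cos v|
  have hd0 : 0 ≤ d := abs_nonneg _
  have hd2 : d ≤ 2 := by
    rw [abs_le]
    constructor <;> linarith [neg_one_le_cos u, cos_le_one u, neg_one_le_cos v, cos_le_one v]
  calc d = d ^ s * d ^ (1 - s) := by
        rw [← rpow_add' hd0 (by norm_num), add_sub_cancel, rpow_one]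
    _ ≤ |u - v| ^ s * 2 ^ (1 - s) := by
        gcongr
        exact abs_cos_sub_cos_le u v
    _ ≤ |u - v| ^ s * 2 := by
        gcongr
        calc (2 : ℝ) ^ (1 - s) ≤ 2 ^ (1 : ℝ) :=
              rpow_le_rpow_of_exponent_le one_le_two (by linarith)
          _ = 2 := rpow_one 2
    _ = 2 * |u - v| ^ s := mul_comm _ _

theorem pow_mul_rpow_le_max_one_rpow {c s α : ℝ} (hc : 0 ≤ c) (hs : 0 ≤ s) {k : ℕ}
    (h : k + s ≤ α) : c ^ k * c ^ s ≤ max 1 c ^ α := by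
  have hM : 0 < max 1 c := lt_max_of_lt_left one_pos
  calc c ^ k * c ^ s ≤ max 1 c ^ k * max 1 c ^ s := by gcongr <;> exact le_max_right 1 c
    _ = max 1 c ^ (k + s) := by rw [rpow_add hM, rpow_natCast]
    _ ≤ max 1 c ^ α := rpow_le_rpow_of_exponent_le (le_max_left 1 c) h

section CosMode

noncomputable def cosMode (a c φ x : ℝ) : ℝ := a * cos (c * x + φ)

variable {a c φ : ℝ}

theorem cosMode_mul_left (b x : ℝ) : cosMode (b * a) c φ x = b * cosMode a c φ x := by
  simp only [cosMode, mul_assoc]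

theorem contDiff_cosMode {n : WithTop ℕ∞} : ContDiff ℝ n (cosMode a c φ) := by
  unfold cosMode
  fun_prop

theorem hasDerivAt_cosMode (x : ℝ) :
    HasDerivAt (cosMode a c φ) (cosMode (a * c) c (φ + π / 2) x) x := by
  unfold cosMode
  refine (((hasDerivAt_id' x).const_mul c).add_const φ).cos.const_mul a |>.congr_deriv ?_
  rw [← add_assoc, cos_add_pi_div_two]
  ring

theorem iteratedDeriv_cosMode (k : ℕ) :
    iteratedDeriv k (cosMode a c φ) = cosMode (a * c ^ k) c (φ + k * (π / 2)) := by
  induction k with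
  | zero => simp
  | succ k ih =>
    ext x
    rw [iteratedDeriv_succ, ih, (hasDerivAt_cosMode x).deriv]
    congr 1 <;> push_cast <;> ring

theorem abs_cosMode_le (x : ℝ) : |cosMode a c φ x| ≤ |a| := by
  rw [cosMode, abs_mul]
  exact mul_le_of_le_one_right (abs_nonneg a) (abs_cos_le_one _)

theorem norm_iteratedFDeriv_cosMode_le (hc : 0 ≤ c) (k : ℕ) (x : ℝ) :
    ‖iteratedFDeriv ℝ k (cosMode a c φ) x‖ ≤ |a| * c ^ k := by
  rw [norm_iteratedFDeriv_eq_norm_iteratedDeriv, iteratedDeriv_cosMode, Real.norm_eq_abs]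
  refine (abs_cosMode_le x).trans ?_
  rw [abs_mul, abs_pow, abs_of_nonneg hc]

theorem norm_iteratedFDeriv_cosMode_le_rpow (hc : 0 ≤ c) {k : ℕ} {α : ℝ} (hk : (k : ℝ) ≤ α)
    (x : ℝ) : ‖iteratedFDeriv ℝ k (cosMode a c φ) x‖ ≤ |a| * max 1 c ^ α := by
  refine (norm_iteratedFDeriv_cosMode_le hc k x).trans ?_
  gcongr
  simpa using pow_mul_rpow_le_max_one_rpow hc le_rfl (by simpa using hk)

theorem abs_cosMode_sub_le (hc : 0 ≤ c) {s : ℝ} (hs0 : 0 ≤ s) (hs1 : s ≤ 1) (x y : ℝ) :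
    |cosMode a c φ x - cosMode a c φ y| ≤ 2 * |a| * c ^ s * |x - y| ^ s := by
  calc |cosMode a c φ x - cosMode a c φ y|
      = |a| * |cos (c * x + φ) - cos (c * y + φ)| := by
        rw [cosMode, cosMode, ← mul_sub, abs_mul]
    _ ≤ |a| * (2 * |(c * x + φ) - (c * y + φ)| ^ s) := by
        gcongr
        exact abs_cos_sub_cos_le_two_mul_rpow _ _ hs0 hs1
    _ = 2 * |a| * c ^ s * |x - y| ^ s := by
        rw [show (c * x + φ) - (c * y + φ) = c * (x - y) by ring, abs_mul, abs_of_nonneg hc,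
          mul_rpow hc (abs_nonneg _)]
        ring

end CosMode

section CosineSeries

variable {a c φ w : ℕ → ℝ} {m : ℕ} {α : ℝ}

theorem contDiff_tsum_cosMode (hc : ∀ i, 0 ≤ c i) (hw : Summable w)
    (haw : ∀ i, |a i| * max 1 (c i) ^ α ≤ w i) (hmα : (m : ℝ) ≤ α) :
    ContDiff ℝ m fun x => ∑' i, cosMode (a i) (c i) (φ i) x :=
  contDiff_tsum (v := fun _ => w) (fun _ => contDiff_cosMode) (fun _ _ => hw) fun _ i x hk =>
    (norm_iteratedFDeriv_cosMode_le_rpow (hc i) ((Nat.cast_le.2 (mod_cast hk)).trans hmα) x).trans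
      (haw i)

theorem abs_iteratedDeriv_tsum_cosMode_sub_le (hc : ∀ i, 0 ≤ c i) (hw : Summable w)
    (haw : ∀ i, |a i| * max 1 (c i) ^ α ≤ w i) (hmα : (m : ℝ) ≤ α) (hαm : α ≤ m + 1)
    (x y : ℝ) :
    |iteratedDeriv m (fun x => ∑' i, cosMode (a i) (c i) (φ i) x) x -
        iteratedDeriv m (fun x => ∑' i, cosMode (a i) (c i) (φ i) x) y| ≤
      2 * (∑' i, w i) * |x - y| ^ (α - m) := by
  have hbound (k i : ℕ) (z : ℝ) (hk : (k : ℕ∞) ≤ m) :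
      ‖iteratedFDeriv ℝ k (cosMode (a i) (c i) (φ i)) z‖ ≤ w i :=
    (norm_iteratedFDeriv_cosMode_le_rpow (hc i) ((Nat.cast_le.2 (mod_cast hk)).trans hmα) z).trans
      (haw i)
  have hsum (z : ℝ) : Summable fun i => iteratedDeriv m (cosMode (a i) (c i) (φ i)) z :=
    .of_norm_bounded hw fun i => by
      rw [← norm_iteratedFDeriv_eq_norm_iteratedDeriv]
      exact hbound m i z le_rfl
  have hterm (i : ℕ) :
      |iteratedDeriv m (cosMode (a i) (c i) (φ i)) x -
          iteratedDeriv m (cosMode (a i) (c i) (φ i)) y| ≤ 2 * w i * |x - y| ^ (α - m) := by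
    rw [iteratedDeriv_cosMode]
    calc _ ≤ 2 * |a i * c i ^ m| * c i ^ (α - m) * |x - y| ^ (α - m) :=
          abs_cosMode_sub_le (hc i) (sub_nonneg.2 hmα) (by linarith) x y
      _ = 2 * (|a i| * (c i ^ m * c i ^ (α - m))) * |x - y| ^ (α - m) := by
          rw [abs_mul, abs_pow, abs_of_nonneg (hc i)]
          ring
      _ ≤ 2 * w i * |x - y| ^ (α - m) := by
          gcongr
          refine le_trans ?_ (haw i)
          gcongr
          exact pow_mul_rpow_le_max_one_rpow (hc i) (sub_nonneg.2 hmα) (by linarith)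
  rw [iteratedDeriv_tsum_apply (v := fun _ => w) (fun _ => contDiff_cosMode) (fun _ _ => hw)
    hbound le_rfl, iteratedDeriv_tsum_apply (v := fun _ => w) (fun _ => contDiff_cosMode)
    (fun _ _ => hw) hbound le_rfl]
  calc _ ≤ ∑' i, 2 * w i * |x - y| ^ (α - m) :=
        abs_tsum_sub_tsum_le (hsum x) (hsum y) ((hw.mul_left 2).mul_right _) hterm
    _ = 2 * (∑' i, w i) * |x - y| ^ (α - m) := by rw [tsum_mul_right, tsum_mul_left]

end CosineSeries

section FourierBasis

noncomputable def fourierAmp (i : ℕ) : ℝ := if i = 0 then 1 else √2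

noncomputable def fourierFreq (i : ℕ) : ℝ := 2 * π * ((i + 1) / 2 : ℕ)

noncomputable def fourierPhase (i : ℕ) : ℝ := if i = 0 ∨ (i + 1) % 2 = 0 then 0 else -(π / 2)

theorem fourierPsi_succ_eq_cosMode (i : ℕ) :
    fourierPsi (i + 1) = cosMode (fourierAmp i) (fourierFreq i) (fourierPhase i) := by
  ext x
  rcases Nat.eq_zero_or_pos i with rfl | hi
  · simp [fourierPsi, cosMode, fourierAmp, fourierFreq, fourierPhase]
  by_cases hpar : (i + 1) % 2 = 0
  · simp [fourierPsi, cosMode, fourierAmp, fourierFreq, fourierPhase, hpar, hi.ne']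
  · simp [fourierPsi, cosMode, fourierAmp, fourierFreq, fourierPhase, hpar, hi.ne',
      ← sub_eq_add_neg, cos_sub_pi_div_two]

theorem abs_fourierAmp_le (i : ℕ) : |fourierAmp i| ≤ √2 := by
  unfold fourierAmp
  split_ifs
  · simp [one_le_sqrt.2 one_le_two]
  · exact (abs_of_nonneg (sqrt_nonneg 2)).le

theorem fourierFreq_nonneg (i : ℕ) : 0 ≤ fourierFreq i := by
  unfold fourierFreq
  positivity

theorem max_one_fourierFreq_le (i : ℕ) : max 1 (fourierFreq i) ≤ 2 * π * (i + 1) := by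
  have h2π : 2 ≤ 2 * π := by linarith [pi_gt_three]
  refine max_le (by nlinarith [(i.cast_nonneg : (0 : ℝ) ≤ i)]) ?_
  unfold fourierFreq
  gcongr
  exact_mod_cast Nat.div_le_self (i + 1) 2

theorem abs_mul_fourierAmp_mul_rpow_le (b : ℝ) (i : ℕ) {α : ℝ} (hα : 0 ≤ α) :
    |b * fourierAmp i| * max 1 (fourierFreq i) ^ α ≤
      √2 * (2 * π) ^ α * (((i : ℝ) + 1) ^ α * |b|) := by
  calc |b * fourierAmp i| * max 1 (fourierFreq i) ^ α
      ≤ |b| * √2 * (2 * π * (i + 1)) ^ α := by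
        rw [abs_mul]
        gcongr
        exacts [abs_fourierAmp_le i, max_one_fourierFreq_le i]
    _ = √2 * (2 * π) ^ α * (((i : ℝ) + 1) ^ α * |b|) := by
        rw [mul_rpow (by positivity) (by positivity)]
        ring

end FourierBasis

theorem holder_class_smoothness_general (α : ℝ) (hα : 0 < α) :
    ∃ C : ℝ, 0 < C ∧ ∀ f : ℕ → ℝ,
      Summable (fun i : ℕ => ((i : ℝ) + 1) ^ α * |f i|) →
      ContDiffOn ℝ (⌊α⌋₊ : ℕ) (fun x : ℝ => ∑' i : ℕ, f i * fourierPsi (i + 1) x)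
        (Set.Icc (0 : ℝ) 1) ∧
      ∀ x ∈ Set.Icc (0 : ℝ) 1, ∀ x' ∈ Set.Icc (0 : ℝ) 1,
        |iteratedDerivWithin ⌊α⌋₊ (fun x : ℝ => ∑' i : ℕ, f i * fourierPsi (i + 1) x)
            (Set.Icc (0 : ℝ) 1) x -
          iteratedDerivWithin ⌊α⌋₊ (fun x : ℝ => ∑' i : ℕ, f i * fourierPsi (i + 1) x)
            (Set.Icc (0 : ℝ) 1) x'| ≤
          C * (∑' i : ℕ, ((i : ℝ) + 1) ^ α * |f i|) * |x - x'| ^ (α - ⌊α⌋₊) := by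
  have hmα : (⌊α⌋₊ : ℝ) ≤ α := Nat.floor_le hα.le
  have hαm : α ≤ ⌊α⌋₊ + 1 := (Nat.lt_floor_add_one α).le
  refine ⟨2 * (√2 * (2 * π) ^ α), by positivity, fun f hS => ?_⟩
  have hseries : (fun x => ∑' i, f i * fourierPsi (i + 1) x) =
      fun x => ∑' i, cosMode (f i * fourierAmp i) (fourierFreq i) (fourierPhase i) x := by
    simp only [fourierPsi_succ_eq_cosMode, cosMode_mul_left]
  have hw := hS.mul_left (√2 * (2 * π) ^ α)
  have haw (i : ℕ) := abs_mul_fourierAmp_mul_rpow_le (f i) i hα.le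
  have hsmooth := contDiff_tsum_cosMode (φ := fourierPhase) fourierFreq_nonneg hw haw hmα
  have hIcc : UniqueDiffOn ℝ (Set.Icc (0 : ℝ) 1) := uniqueDiffOn_Icc zero_lt_one
  rw [hseries]
  refine ⟨hsmooth.contDiffOn, fun x hx x' hx' => ?_⟩
  rw [iteratedDerivWithin_eq_iteratedDeriv hIcc hsmooth.contDiffAt hx,
    iteratedDerivWithin_eq_iteratedDeriv hIcc hsmooth.contDiffAt hx']
  calc _ ≤ 2 * (∑' i : ℕ, √2 * (2 * π) ^ α * (((i : ℝ) + 1) ^ α * |f i|)) *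
        |x - x'| ^ (α - ⌊α⌋₊) :=
        abs_iteratedDeriv_tsum_cosMode_sub_le fourierFreq_nonneg hw haw hmα hαm x x'
    _ = _ := by rw [tsum_mul_left]; ring

/-- Let `α > 0` be a non-integer and `m = ⌊α⌋`. There is `C > 0` depending
only on `α` such that every `f = ∑ f_i ψ_i` with `S = ∑ i^α |f_i| < ∞` is `m` times
continuously differentiable on `[0,1]` and its `m`-th derivative is Hölder continuous
of order `α − m` with constant `C·S`. -/
theorem holder_class_smoothness (α : ℝ) (hα : 0 < α) (hαnonint : ∀ n : ℕ, α ≠ (n : ℝ)) :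
    ∃ C : ℝ, 0 < C ∧ ∀ f : ℕ → ℝ,
      Summable (fun i : ℕ => ((i : ℝ) + 1) ^ α * |f i|) →
      ContDiffOn ℝ (⌊α⌋₊ : ℕ) (fun x : ℝ => ∑' i : ℕ, f i * fourierPsi (i + 1) x)
        (Set.Icc (0 : ℝ) 1) ∧
      ∀ x ∈ Set.Icc (0 : ℝ) 1, ∀ x' ∈ Set.Icc (0 : ℝ) 1,
        |iteratedDerivWithin ⌊α⌋₊ (fun x : ℝ => ∑' i : ℕ, f i * fourierPsi (i + 1) x)
            (Set.Icc (0 : ℝ) 1) x -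
          iteratedDerivWithin ⌊α⌋₊ (fun x : ℝ => ∑' i : ℕ, f i * fourierPsi (i + 1) x)
            (Set.Icc (0 : ℝ) 1) x'| ≤
          C * (∑' i : ℕ, ((i : ℝ) + 1) ^ α * |f i|) * |x - x'| ^ (α - ⌊α⌋₊) :=
  holder_class_smoothness_general α hα
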